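/- arXiv:2603.15792 — 6 statements merged into one kernel-verified Lean document; each statement's English description precedes it below -/
import Mathlib

section
/- Let D and T be finite types, (ψ_t)_{t∈T} an orthonormal family of vectors in ℂ^D, and β : T × T → ℂ such that the matrix ρ = ∑_{i,j∈T} β(i,j)·ψ_i ψ_j^* (where ψ_i ψ_j^* denotes the rank-one matrix with entries ψ_i(a)·conj(ψ_j(a'))) is a density matrix. Define ρ̃ = ∑_{t∈T} β(t,t)·ψ_t ψ_t^*. Then |T|·ρ̃ − ρ is positive semidefinite. -/
/-!
Writing `Ψ` for the matrix with columns `ψ t` and `B` for the coefficient matrix `β`, we have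
`ρ = Ψ B Ψᴴ` and `ρ̃ = Ψ diag(B) Ψᴴ`, and orthonormality `Ψᴴ Ψ = 1` gives `B = Ψᴴ ρ Ψ ≥ 0`.
So it suffices that `|T| diag(B) - B ≥ 0` for every `B ≥ 0`. This matrix is the Schur product of
`B` with `|T| • 1 - J` (`J` the all-ones matrix), which is `|T|` times the orthogonal projection
onto the complement of the constant vectors; the Schur product theorem concludes.
-/

open Matrix BigOperators
open scoped Classical ComplexOrder

noncomputable section

/-- A density matrix: positive semidefinite with unit trace. -/
def IsDensity {X : Type} [Fintype X] [DecidableEq X] (M : Matrix X X ℂ) : Prop :=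
  M.PosSemidef ∧ M.trace = 1

/-- The rank-one matrix `|v⟩⟨w|`. -/
def outer {X : Type} (v w : X → ℂ) : Matrix X X ℂ :=
  fun x x' => v x * (starRingEnd ℂ) (w x')

namespace Matrix

variable {𝕜 n : Type*} [RCLike 𝕜] [Fintype n] [DecidableEq n]

theorem posSemidef_card_smul_one_sub_of_const_one :
    ((Fintype.card n : 𝕜) • (1 : Matrix n n 𝕜) - of fun _ _ => 1).PosSemidef := by
  rcases isEmpty_or_nonempty n with hn | hn
  · rw [Subsingleton.elim (_ - _) 0]
    exact .zero
  have hcard : (Fintype.card n : 𝕜) ≠ 0 := Nat.cast_ne_zero.2 Fintype.card_ne_zero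
  set P : Matrix n n 𝕜 := (Fintype.card n : 𝕜)⁻¹ • of fun _ _ => 1
  have hP_herm : Pᴴ = P := by ext; simp [P]
  have hP_idem : P * P = P := by ext; simp [P, mul_apply]
  have h_eq : (Fintype.card n : 𝕜) • (1 : Matrix n n 𝕜) - (of fun _ _ => 1)
      = (Fintype.card n : 𝕜) • ((1 - P)ᴴ * (1 - P)) := by
    rw [conjTranspose_sub, conjTranspose_one, hP_herm, sub_mul, mul_sub, mul_sub, hP_idem]
    simp [P, smul_sub, smul_smul, hcard]
  rw [h_eq]
  exact (posSemidef_conjTranspose_mul_self _).smul (Nat.cast_nonneg _)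

theorem PosSemidef.card_smul_diagonal_diag_sub {B : Matrix n n 𝕜} (hB : B.PosSemidef) :
    ((Fintype.card n : 𝕜) • diagonal B.diag - B).PosSemidef := by
  convert posSemidef_card_smul_one_sub_of_const_one.hadamard hB using 1
  ext i j
  by_cases h : i = j
  · subst h
    simp
    ring
  · simp [h]

end Matrix

section Outer

variable {D T : Type} (ψ : T → D → ℂ)

theorem sum_sum_smul_outer_eq_mul_mul_conjTranspose [Fintype T] (B : Matrix T T ℂ) :
    ∑ i, ∑ j, B i j • outer (ψ i) (ψ j) = (of ψ)ᵀ * B * (of ψ)ᵀᴴ := by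
  ext a b
  simp only [Matrix.sum_apply, Matrix.smul_apply, outer, mul_apply, transpose_apply, of_apply,
    conjTranspose_apply, smul_eq_mul, Finset.sum_mul, RCLike.star_def]
  rw [Finset.sum_comm]
  exact Finset.sum_congr rfl fun j _ => Finset.sum_congr rfl fun i _ => by ring

theorem sum_smul_outer_self_eq_mul_diagonal_mul_conjTranspose [Fintype T] [DecidableEq T] (d : T → ℂ) :
    ∑ t, d t • outer (ψ t) (ψ t) = (of ψ)ᵀ * diagonal d * (of ψ)ᵀᴴ := by
  rw [← sum_sum_smul_outer_eq_mul_mul_conjTranspose]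
  simp [diagonal_apply, ite_smul]

theorem conjTranspose_mul_self_eq_one_of_orthonormal [Fintype D] [DecidableEq T]
    (horth : ∀ i j, (∑ a, (starRingEnd ℂ) (ψ i a) * ψ j a) = if i = j then 1 else 0) :
    (of ψ)ᵀᴴ * (of ψ)ᵀ = 1 := by
  ext i j
  simp [mul_apply, one_apply, horth]

end Outer

/-- the pinching (dephasing) of a density matrix in an orthonormal family
dominates the state up to the factor `|T|`. -/
theorem pinching_operator_inequality
    {D T : Type} [Fintype D] [DecidableEq D] [Fintype T]
    (ψ : T → D → ℂ)
    (horth : ∀ i j, (∑ a, (starRingEnd ℂ) (ψ i a) * ψ j a) = if i = j then 1 else 0)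
    (β : T × T → ℂ)
    (ρ : Matrix D D ℂ)
    (hρdef : ρ = ∑ i : T, ∑ j : T, β (i, j) • outer (ψ i) (ψ j))
    (hρ : IsDensity ρ) :
    (((Fintype.card T : ℂ) • (∑ t : T, β (t, t) • outer (ψ t) (ψ t)) - ρ)).PosSemidef := by
  set Ψ : Matrix D T ℂ := (of ψ)ᵀ
  set B : Matrix T T ℂ := of fun i j => β (i, j)
  have hΨ : Ψᴴ * Ψ = 1 := conjTranspose_mul_self_eq_one_of_orthonormal ψ horth
  have hρΨ : ρ = Ψ * B * Ψᴴ := hρdef.trans (sum_sum_smul_outer_eq_mul_mul_conjTranspose ψ B)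
  have hpinch : ∑ t, β (t, t) • outer (ψ t) (ψ t) = Ψ * diagonal B.diag * Ψᴴ :=
    sum_smul_outer_self_eq_mul_diagonal_mul_conjTranspose ψ _
  have hB : B.PosSemidef := by
    have hB_eq : B = Ψᴴ * ρ * Ψ := by
      simp only [hρΨ, Matrix.mul_assoc]
      rw [hΨ, Matrix.mul_one, ← Matrix.mul_assoc, hΨ, Matrix.one_mul]
    exact hB_eq ▸ hρ.1.conjTranspose_mul_mul_same Ψ
  rw [hpinch, hρΨ, ← Matrix.smul_mul, ← Matrix.mul_smul, ← Matrix.sub_mul, ← Matrix.mul_sub]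
  exact hB.card_smul_diagonal_diag_sub.mul_mul_conjTranspose_same Ψ

end
end

section
/- Let D be a finite type with |D| = d ≥ 1, θ ∈ ℂ^D a unit vector, and n, r ∈ ℕ with 1 ≤ n and r ≤ n. Then the linear span of V(n, θ, r) admits an orthonormal basis all of whose elements belong to V(n, θ, r), and its dimension is at most C(n, r)·d^r; moreover C(n, r)·d^r ≤ 2^{n·h(r/n)}·d^r. -/
open Matrix BigOperators
open scoped Classical ComplexOrder

noncomputable section

/-- The set `V(n, θ, r)` of vectors that are `θ`-iid on `n - r` positions and arbitrary
on the remaining `r` positions. -/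
def VSet {D : Type} (n : ℕ) (θ : D → ℂ) (r : ℕ) : Set ((Fin n → D) → ℂ) :=
  {v | ∃ S : Finset (Fin n), S.card = n - r ∧
    ∃ Ω : ({i : Fin n // i ∉ S} → D) → ℂ,
      ∀ x : Fin n → D, v x = (∏ i ∈ S, θ (x i)) * Ω (fun i => x i.1)}

/-- A unit vector w.r.t. the standard Hermitian inner product. -/
def IsUnitVec {X : Type} [Fintype X] (v : X → ℂ) : Prop :=
  ∑ x, (starRingEnd ℂ) (v x) * v x = 1

/-- Binary entropy function (base 2). -/
def binEnt (x : ℝ) : ℝ := -(x * Real.logb 2 x) - (1 - x) * Real.logb 2 (1 - x)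

/-! Extend `θ` to an orthonormal basis `(b k)` of `ℂ^D` with `b i₀ = θ`. The product vectors
`x ↦ ∏ i, b (f i) (x i)`, `f : Fin n → D`, are orthonormal, and those with `f i = i₀` outside at
most `r` positions lie in `V(n, θ, r)`. They span it: an element `θ^{⊗S} ⊗ Ω` is the image of `Ω`
under the linear map `Ω ↦ θ^{⊗S} ⊗ Ω`, and `Ω` expands in the product basis of the remaining
coordinates. Choosing the `r` free positions and their values bounds their number by
`C(n, r) d^r`, and `C(n, r) p^r (1 - p)^(n - r) ≤ 1` at `p = r / n` is the entropy bound. -/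

open Finset

def PiOrthonormal {ι X : Type*} [DecidableEq ι] [Fintype X] (ψ : ι → X → ℂ) : Prop :=
  ∀ i j, ∑ x, (starRingEnd ℂ) (ψ i x) * ψ j x = if i = j then 1 else 0

def tensorVec {ι κ D : Type*} [Fintype ι] (b : κ → D → ℂ) (f : ι → κ) : (ι → D) → ℂ :=
  fun x => ∏ i, b (f i) (x i)

lemma EuclideanSpace.inner_eq_sum_conj_mul {X : Type*} [Fintype X] (x y : EuclideanSpace ℂ X) :
    inner ℂ x y = ∑ a, (starRingEnd ℂ) (x a) * y a := by
  simp only [PiLp.inner_apply, RCLike.inner_apply']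

lemma piOrthonormal_iff_orthonormal_toLp {ι X : Type*} [DecidableEq ι] [Fintype X]
    {ψ : ι → X → ℂ} :
    PiOrthonormal ψ ↔ Orthonormal ℂ (fun i => WithLp.toLp 2 (ψ i) : ι → EuclideanSpace ℂ X) := by
  simp only [orthonormal_iff_ite, EuclideanSpace.inner_eq_sum_conj_mul]
  rfl

namespace PiOrthonormal

variable {ι X : Type*} [DecidableEq ι] [Fintype X] {ψ : ι → X → ℂ}

lemma comp {ι' : Type*} [DecidableEq ι'] (h : PiOrthonormal ψ) {e : ι' → ι} (he : e.Injective) :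
    PiOrthonormal (ψ ∘ e) := fun i j => by
  simp only [Function.comp_apply, h (e i) (e j), he.eq_iff]

lemma linearIndependent (h : PiOrthonormal ψ) : LinearIndependent ℂ ψ :=
  (piOrthonormal_iff_orthonormal_toLp.mp h).linearIndependent.map'
    (WithLp.linearEquiv 2 ℂ (X → ℂ)).toLinearMap (WithLp.linearEquiv 2 ℂ (X → ℂ)).ker

lemma span_eq_top [Fintype ι] (h : PiOrthonormal ψ) (hcard : Fintype.card ι = Fintype.card X) :
    Submodule.span ℂ (Set.range ψ) = ⊤ :=
  h.linearIndependent.span_eq_top_of_card_eq_finrank'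
    (by rw [Module.finrank_fintype_fun_eq_card, hcard])

lemma tensorVec {κ D : Type*} [DecidableEq κ] [Fintype D] {b : κ → D → ℂ} (hb : PiOrthonormal b)
    (K : Type*) [Fintype K] [DecidableEq K] :
    PiOrthonormal (tensorVec b : (K → κ) → (K → D) → ℂ) := by
  intro f g
  simp only [_root_.tensorVec, map_prod, ← Finset.prod_mul_distrib]
  rw [← Fintype.prod_sum (fun i a => (starRingEnd ℂ) (b (f i) a) * b (g i) a),
    Finset.prod_congr rfl fun i _ => hb (f i) (g i), Fintype.prod_boole]
  simp only [funext_iff]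

end PiOrthonormal

lemma exists_piOrthonormal_apply_eq {D : Type} [Fintype D] {θ : D → ℂ} (hθ : IsUnitVec θ)
    (i0 : D) : ∃ b : D → D → ℂ, PiOrthonormal b ∧ b i0 = θ := by
  have hθ' : Orthonormal ℂ (({i0} : Set D).domRestrict fun _ => WithLp.toLp 2 θ) := by
    rw [orthonormal_iff_ite]
    rintro ⟨i, rfl⟩ ⟨j, rfl⟩
    rw [EuclideanSpace.inner_eq_sum_conj_mul, if_pos rfl]
    exact hθ
  obtain ⟨b, hb⟩ := hθ'.exists_orthonormalBasis_extension_of_card_eq (by simp)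
  exact ⟨fun k => b k, piOrthonormal_iff_orthonormal_toLp.mpr b.orthonormal, by simp [hb i0 rfl]⟩

section VSet

variable {D : Type} {b : D → D → ℂ} {θ : D → ℂ} {i0 : D}

lemma tensorVec_dite_apply {ι : Type*} [Fintype ι] [DecidableEq ι] (hθ : b i0 = θ) (S : Finset ι)
    (g : {i // i ∉ S} → D) (x : ι → D) :
    tensorVec b (fun i => if h : i ∈ S then i0 else g ⟨i, h⟩) x
      = (∏ i ∈ S, θ (x i)) * tensorVec b g (fun i => x i.1) := by
  rw [tensorVec, ← prod_mul_prod_compl S, tensorVec, ← hθ,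
    prod_subtype Sᶜ (fun _ => mem_compl)]
  congr 1
  · exact prod_congr rfl fun i hi => by rw [dif_pos hi]
  · exact prod_congr rfl fun i _ => by rw [dif_neg i.2]

lemma tensorVec_mem_VSet [DecidableEq D] (hθ : b i0 = θ) {n r : ℕ} {f : Fin n → D}
    (hf : hammingDist f (fun _ => i0) ≤ r) : tensorVec b f ∈ VSet n θ r := by
  have hfix : n - r ≤ #{i | f i = i0} := by
    have hsplit := card_filter_add_card_filter_not (s := univ) (fun i => f i = i0)
    have hdist : hammingDist f (fun _ => i0) = #{i | ¬f i = i0} := rfl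
    rw [card_univ, Fintype.card_fin] at hsplit
    omega
  obtain ⟨S, hS, hcard⟩ := exists_subset_card_eq hfix
  refine ⟨S, hcard, tensorVec b fun i : {i // i ∉ S} => f i, fun x => ?_⟩
  rw [← tensorVec_dite_apply hθ]
  congr
  funext i
  split_ifs with hi
  · exact (mem_filter.mp (hS hi)).2
  · rfl

lemma VSet_subset_span_tensorVec [Fintype D] [DecidableEq D] (hb : PiOrthonormal b)
    (hθ : b i0 = θ) (n r : ℕ) :
    VSet n θ r ⊆ Submodule.span ℂ
      (Set.range fun f : {f : Fin n → D // hammingDist f (fun _ => i0) ≤ r} =>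
        tensorVec b f.1) := by
  rintro v ⟨S, hS, Ω, hΩ⟩
  let L : (({i // i ∉ S} → D) → ℂ) →ₗ[ℂ] (Fin n → D) → ℂ :=
    LinearMap.mulLeft ℂ (fun x => ∏ i ∈ S, θ (x i)) ∘ₗ LinearMap.funLeft ℂ ℂ (fun x i => x i.1)
  have hΩ_span : Ω ∈ Submodule.span ℂ (Set.range (tensorVec b)) := by
    rw [(hb.tensorVec _).span_eq_top rfl]
    trivial
  have hv : v ∈ Submodule.span ℂ (Set.range (L ∘ tensorVec b)) := by
    rw [Set.range_comp, Submodule.span_image]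
    exact funext hΩ ▸ Submodule.mem_map_of_mem hΩ_span
  refine Submodule.span_mono ?_ hv
  rintro _ ⟨g, rfl⟩
  refine ⟨⟨fun i => if h : i ∈ S then i0 else g ⟨i, h⟩, ?_⟩, funext fun x => ?_⟩
  · calc hammingDist _ (fun _ => i0) ≤ #Sᶜ :=
          card_le_card fun i hi => mem_compl.mpr fun h => (mem_filter.mp hi).2 (dif_pos h)
      _ ≤ r := by rw [card_compl, Fintype.card_fin]; omega
  · exact tensorVec_dite_apply hθ S g x

end VSet

lemma card_hammingDist_const_le {ι D : Type*} [Fintype ι] [DecidableEq ι] [Fintype D]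
    [DecidableEq D] (i0 : D) {r : ℕ} (hr : r ≤ Fintype.card ι) :
    Fintype.card {f : ι → D // hammingDist f (fun _ => i0) ≤ r}
      ≤ (Fintype.card ι).choose r * Fintype.card D ^ r := by
  let box : Finset ι → Finset (ι → D) :=
    fun T => Fintype.piFinset fun i => if i ∈ T then univ else {i0}
  have hcover : ({f | hammingDist f (fun _ => i0) ≤ r} : Finset (ι → D)) ⊆
      (powersetCard r univ).biUnion box := by
    intro f hf
    obtain ⟨T, hT, hTcard⟩ :=
      exists_superset_card_eq (s := {i | f i ≠ i0}) (mem_filter.mp hf).2 hr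
    refine mem_biUnion.mpr ⟨T, mem_powersetCard.mpr ⟨subset_univ T, hTcard⟩, ?_⟩
    refine Fintype.mem_piFinset.mpr fun i => ?_
    split_ifs with hi
    · exact mem_univ _
    · exact mem_singleton.mpr (not_not.mp fun h => hi (hT (mem_filter.mpr ⟨mem_univ i, h⟩)))
  have hbox : ∀ T ∈ powersetCard r univ, #(box T) = Fintype.card D ^ r := fun T hT => by
    simp [box, Fintype.card_piFinset, apply_ite, (mem_powersetCard.mp hT).2]
  rw [Fintype.card_subtype]
  calc _ ≤ #((powersetCard r univ).biUnion box) := card_le_card hcover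
    _ ≤ ∑ T ∈ powersetCard r univ, #(box T) := card_biUnion_le
    _ = _ := by rw [sum_congr rfl hbox, sum_const, card_powersetCard, card_univ, smul_eq_mul]

lemma choose_mul_pow_mul_pow_le_one {p : ℝ} (hp0 : 0 ≤ p) (hp1 : p ≤ 1) {n r : ℕ} (hr : r ≤ n) :
    n.choose r * (p ^ r * (1 - p) ^ (n - r)) ≤ 1 := by
  calc _ = p ^ r * (1 - p) ^ (n - r) * n.choose r := by ring
    _ ≤ ∑ k ∈ range (n + 1), p ^ k * (1 - p) ^ (n - k) * n.choose k :=
      single_le_sum (f := fun k => p ^ k * (1 - p) ^ (n - k) * n.choose k)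
        (fun k _ => by positivity) (mem_range.mpr (Nat.lt_succ_of_le hr))
    _ = 1 := by rw [← add_pow, add_sub_cancel, one_pow]

lemma two_rpow_mul_binEnt {p : ℝ} (hp0 : 0 < p) (hp1 : p < 1) (a : ℝ) :
    (2 : ℝ) ^ (a * binEnt p) = (p ^ (a * p) * (1 - p) ^ (a * (1 - p)))⁻¹ := by
  have two_rpow_mul_logb : ∀ q : ℝ, 0 < q → ∀ c : ℝ, (2 : ℝ) ^ (c * Real.logb 2 q) = q ^ c :=
    fun q hq c => by
      rw [mul_comm, Real.rpow_mul zero_le_two, Real.rpow_logb zero_lt_two (by norm_num) hq]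
  rw [binEnt, show a * (-(p * Real.logb 2 p) - (1 - p) * Real.logb 2 (1 - p))
      = -(a * p * Real.logb 2 p + a * (1 - p) * Real.logb 2 (1 - p)) by ring,
    Real.rpow_neg zero_le_two, Real.rpow_add zero_lt_two, two_rpow_mul_logb p hp0,
    two_rpow_mul_logb (1 - p) (sub_pos.mpr hp1)]

lemma choose_le_two_rpow_mul_binEnt {n r : ℕ} (hr : r ≤ n) :
    (n.choose r : ℝ) ≤ 2 ^ ((n : ℝ) * binEnt (r / n)) := by
  rcases r.eq_zero_or_pos with rfl | hr0
  · simp [binEnt]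
  rcases hr.eq_or_lt with rfl | hrn
  · have hrr : (r : ℝ) / r = 1 := div_self (by positivity)
    simp [binEnt, hrr]
  have hn : (0 : ℝ) < n := by exact_mod_cast hr0.trans hrn
  set p : ℝ := r / n with hp
  have hp0 : 0 < p := by positivity
  have hp1 : p < 1 := (div_lt_one hn).mpr (by exact_mod_cast hrn)
  have hnp : (n : ℝ) * p = r := by rw [hp]; field_simp
  have hnq : (n : ℝ) * (1 - p) = (n - r : ℕ) := by rw [Nat.cast_sub hr, hp]; field_simp
  rw [two_rpow_mul_binEnt hp0 hp1, hnp, hnq, Real.rpow_natCast, Real.rpow_natCast, ← one_div,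
    le_div_iff₀ (by have := sub_pos.mpr hp1; positivity)]
  exact choose_mul_pow_mul_pow_le_one hp0.le hp1.le hr

lemma IsUnitVec.nonempty {X : Type} [Fintype X] {v : X → ℂ} (hv : IsUnitVec v) : Nonempty X := by
  by_contra hX
  rw [not_nonempty_iff] at hX
  simp [IsUnitVec] at hv

theorem VSet_span_ONB_general
    {D : Type} [Fintype D]
    (d : ℕ) (hd : Fintype.card D = d)
    (θ : D → ℂ) (hθ : IsUnitVec θ)
    (n r : ℕ) (hr : r ≤ n) :
    (∃ (m : ℕ) (ψ : Fin m → ((Fin n → D) → ℂ)),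
      (∀ i, ψ i ∈ VSet n θ r) ∧
      (∀ i j, (∑ x, (starRingEnd ℂ) (ψ i x) * ψ j x) = if i = j then 1 else 0) ∧
      Submodule.span ℂ (Set.range ψ) = Submodule.span ℂ (VSet n θ r) ∧
      m ≤ n.choose r * d ^ r) ∧
    Module.finrank ℂ (Submodule.span ℂ (VSet n θ r)) ≤ n.choose r * d ^ r ∧
    ((n.choose r * d ^ r : ℕ) : ℝ) ≤
      2 ^ ((n : ℝ) * binEnt ((r : ℝ) / n)) * (d : ℝ) ^ r := by
  obtain ⟨i0⟩ := hθ.nonempty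
  obtain ⟨b, hb, hθb⟩ := exists_piOrthonormal_apply_eq hθ i0
  let ι := {f : Fin n → D // hammingDist f (fun _ => i0) ≤ r}
  let e := Fintype.equivFin ι
  let ψ : Fin (Fintype.card ι) → (Fin n → D) → ℂ := fun k => tensorVec b (e.symm k).1
  have hψ_mem : ∀ k, ψ k ∈ VSet n θ r := fun k => tensorVec_mem_VSet hθb (e.symm k).2
  have hψ_span : Submodule.span ℂ (Set.range ψ) = Submodule.span ℂ (VSet n θ r) := by
    refine le_antisymm (Submodule.span_mono (Set.range_subset_iff.mpr hψ_mem)) ?_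
    rw [Submodule.span_le, show Set.range ψ = Set.range fun f : ι => tensorVec b f.1 from
      EquivLike.range_comp (fun f : ι => tensorVec b f.1) e.symm]
    exact VSet_subset_span_tensorVec hb hθb n r
  have hcard : Fintype.card ι ≤ n.choose r * d ^ r := by
    simpa [hd] using card_hammingDist_const_le (ι := Fin n) i0 (r := r) (by simpa using hr)
  refine ⟨⟨_, ψ, hψ_mem, (hb.tensorVec _).comp (Subtype.val_injective.comp e.symm.injective),
    hψ_span, hcard⟩, ?_, ?_⟩
  · rw [← hψ_span]
    exact (finrank_range_le_card ψ).trans (by simpa using hcard)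
  · push_cast
    exact mul_le_mul_of_nonneg_right (choose_le_two_rpow_mul_binEnt hr) (by positivity)

/-- the span of `V(n, θ, r)` admits an orthonormal basis consisting of
vectors of `V(n, θ, r)`, of size at most `C(n,r)·d^r ≤ 2^{n·h(r/n)}·d^r`. -/
theorem VSet_span_ONB
    {D : Type} [Fintype D] [DecidableEq D]
    (d : ℕ) (hd : Fintype.card D = d) (hd1 : 1 ≤ d)
    (θ : D → ℂ) (hθ : IsUnitVec θ)
    (n r : ℕ) (hn : 1 ≤ n) (hr : r ≤ n) :
    (∃ (m : ℕ) (ψ : Fin m → ((Fin n → D) → ℂ)),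
      (∀ i, ψ i ∈ VSet n θ r) ∧
      (∀ i j, (∑ x, (starRingEnd ℂ) (ψ i x) * ψ j x) = if i = j then 1 else 0) ∧
      Submodule.span ℂ (Set.range ψ) = Submodule.span ℂ (VSet n θ r) ∧
      m ≤ n.choose r * d ^ r) ∧
    Module.finrank ℂ (Submodule.span ℂ (VSet n θ r)) ≤ n.choose r * d ^ r ∧
    ((n.choose r * d ^ r : ℕ) : ℝ) ≤
      2 ^ ((n : ℝ) * binEnt ((r : ℝ) / n)) * (d : ℝ) ^ r :=
  VSet_span_ONB_general d hd θ hθ n r hr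
end
end

section
/- Let A be a finite type, σ a density matrix on ℂ^A, and n, m, r ∈ ℕ with r ≤ n. If ρ is an (n + m, r)-almost-iid state in σ on ℂ^(Fin (n+m) → A), then the marginal of ρ on the first n subsystems (the partial trace over the last m tensor factors) is an (n, r)-almost-iid state in σ. -/
open Matrix BigOperators Kronecker Filter
open scoped Classical ComplexOrder

noncomputable section

/-- Partial trace over the second tensor factor. -/
def ptraceSnd {X E : Type} [Fintype E] (M : Matrix (X × E) (X × E) ℂ) : Matrix X X ℂ :=
  fun x x' => ∑ e : E, M (x, e) (x', e)

/-- Partial trace over the first tensor factor. -/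
def ptraceFst {X E : Type} [Fintype X] (M : Matrix (X × E) (X × E) ℂ) : Matrix E E ℂ :=
  fun e e' => ∑ x : X, M (x, e) (x, e')

/-- Partial trace over the `E`-components of an `n`-fold system of pairs. -/
def ptraceE {A E : Type} [Fintype E] {n : ℕ}
    (M : Matrix (Fin n → A × E) (Fin n → A × E) ℂ) : Matrix (Fin n → A) (Fin n → A) ℂ :=
  fun a a' => ∑ e : Fin n → E, M (fun i => (a i, e i)) (fun i => (a' i, e i))

/-- Invariance under the simultaneous permutation action of all permutations of `Fin n`. -/
def PermInvariant {D : Type} {n : ℕ} (M : Matrix (Fin n → D) (Fin n → D) ℂ) : Prop :=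
  ∀ π : Equiv.Perm (Fin n), ∀ x y : Fin n → D, M (x ∘ π) (y ∘ π) = M x y

/-- The range of a matrix is contained in the span of a set of vectors. -/
def RangeInSpan {X : Type} [Fintype X] (M : Matrix X X ℂ) (V : Set (X → ℂ)) : Prop :=
  LinearMap.range M.mulVecLin ≤ Submodule.span ℂ V

/-- `ρ` is an `(n, r)`-almost-iid state in `σ`. -/
def IsAlmostIID {A : Type} [Fintype A] [DecidableEq A] (n r : ℕ)
    (σ : Matrix A A ℂ) (ρ : Matrix (Fin n → A) (Fin n → A) ℂ) : Prop :=
  ∃ (E : Type) (_ : Fintype E) (_ : DecidableEq E) (θ : A × E → ℂ),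
    IsUnitVec θ ∧ ptraceSnd (outer θ θ) = σ ∧
    ∃ ρhat : Matrix (Fin n → A × E) (Fin n → A × E) ℂ,
      IsDensity ρhat ∧ ptraceE ρhat = ρ ∧
      PermInvariant ρhat ∧ RangeInSpan ρhat (VSet n θ r)

/-- The `s`-fold tensor power of a matrix. -/
def tensorPow {X : Type} (M : Matrix X X ℂ) (s : ℕ) : Matrix (Fin s → X) (Fin s → X) ℂ :=
  fun x y => ∏ i, M (x i) (y i)

/-- Marginal on the first `s` subsystems (partial trace over the last `n - s` factors). -/
def marginalFirst {A : Type} [Fintype A] (n s : ℕ)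
    (M : Matrix (Fin n → A) (Fin n → A) ℂ) : Matrix (Fin s → A) (Fin s → A) ℂ :=
  fun x y => ∑ z : Fin (n - s) → A,
    M (fun i => if h : (i : ℕ) < s then x ⟨i, h⟩ else z ⟨(i : ℕ) - s, by have := i.isLt; omega⟩)
      (fun i => if h : (i : ℕ) < s then y ⟨i, h⟩ else z ⟨(i : ℕ) - s, by have := i.isLt; omega⟩)

/-- Von Neumann entropy (base 2), via the eigenvalues of a Hermitian matrix. -/
def vnEntropy {X : Type} [Fintype X] [DecidableEq X] (M : Matrix X X ℂ) : ℝ :=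
  if h : M.IsHermitian then -∑ i, h.eigenvalues i * Real.logb 2 (h.eigenvalues i) else 0

/-- Trace norm of a Hermitian matrix: sum of absolute values of the eigenvalues. -/
def traceNorm {X : Type} [Fintype X] [DecidableEq X] (M : Matrix X X ℂ) : ℝ :=
  if h : M.IsHermitian then ∑ i, |h.eigenvalues i| else 0

/-- Conditional entropy `H(A|B) = H(AB) - H(B)` of a bipartite density matrix. -/
def condEnt {A B : Type} [Fintype A] [Fintype B] [DecidableEq A] [DecidableEq B]
    (M : Matrix (A × B) (A × B) ℂ) : ℝ :=
  vnEntropy M - vnEntropy (ptraceFst M)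

/-- View a matrix on `Fin n → A × B` as a matrix on `(Fin n → A) × (Fin n → B)` via the
canonical bijection. -/
def splitAB {A B : Type} (n : ℕ) (M : Matrix (Fin n → A × B) (Fin n → A × B) ℂ) :
    Matrix ((Fin n → A) × (Fin n → B)) ((Fin n → A) × (Fin n → B)) ℂ :=
  Matrix.reindex (Equiv.arrowProdEquivProdArrow (Fin n) (fun _ => A) (fun _ => B))
    (Equiv.arrowProdEquivProdArrow (Fin n) (fun _ => A) (fun _ => B)) M

/-
The witness for the marginal is the marginal of the same extension `ρ̂`, with the same
purification `θ`. Tracing out the last `m` sites is a partial trace after reindexing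
`Fin (n + m) → A × E` as `(Fin n → A × E) × (Fin m → A × E)`, so it preserves positivity, trace
and permutation invariance of the first `n` sites, and it commutes with tracing out `E`.
For the range: the marginal maps a vector `u` to a sum, over the values `z` of the traced
sites, of slices `x ↦ w (append x z)` of vectors `w` in the range of `ρ̂`, and fixing the last
`m` coordinates of a vector in `V(n + m, θ, r)` leaves at least `n - r` of its `θ`-factors among
the first `n` sites.
-/

section PartialTrace

variable {X Y E : Type} [Fintype E]

lemma ptraceSnd_eq_sum_submatrix (M : Matrix (X × E) (X × E) ℂ) :
    ptraceSnd M = ∑ e, M.submatrix (·, e) (·, e) := by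
  ext x y
  simp [ptraceSnd, Matrix.sum_apply]

lemma Matrix.PosSemidef.ptraceSnd {M : Matrix (X × E) (X × E) ℂ} (hM : M.PosSemidef) :
    (ptraceSnd M).PosSemidef := by
  rw [ptraceSnd_eq_sum_submatrix]
  exact posSemidef_sum _ fun e _ => hM.submatrix _

lemma trace_ptraceSnd [Fintype X] (M : Matrix (X × E) (X × E) ℂ) :
    (ptraceSnd M).trace = M.trace := by
  simp [Matrix.trace, ptraceSnd, Fintype.sum_prod_type]

lemma trace_submatrix_equiv [Fintype X] [Fintype Y] (M : Matrix Y Y ℂ) (e : X ≃ Y) :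
    (M.submatrix e e).trace = M.trace :=
  Fintype.sum_equiv e _ _ fun _ => rfl

lemma ptraceSnd_mulVec [Fintype X] [DecidableEq E] (M : Matrix (X × E) (X × E) ℂ) (u : X → ℂ) :
    ptraceSnd M *ᵥ u = ∑ e, fun x => (M *ᵥ fun p => if p.2 = e then u p.1 else 0) (x, e) := by
  ext x
  simp only [Finset.sum_apply, mulVec, dotProduct, ptraceSnd, Fintype.sum_prod_type, mul_ite,
    mul_zero, Finset.sum_ite_eq', Finset.mem_univ, if_true, Finset.sum_mul]
  exact Finset.sum_comm

end PartialTrace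

lemma Submodule.apply_mem_span_of_mapsTo {R M N : Type*} [Semiring R] [AddCommMonoid M]
    [Module R M] [AddCommMonoid N] [Module R N] (f : M →ₗ[R] N) {V : Set M} {W : Set N}
    (hVW : Set.MapsTo f V W) {w : M} (hw : w ∈ Submodule.span R V) :
    f w ∈ Submodule.span R W :=
  Submodule.span_mono hVW.image_subset (Submodule.apply_mem_span_image_of_mem_span f hw)

section RangeInSpan

variable {X Y E : Type} [Fintype X] [Fintype Y] [Fintype E]

lemma rangeInSpan_iff {M : Matrix X X ℂ} {V : Set (X → ℂ)} :
    RangeInSpan M V ↔ ∀ u, M *ᵥ u ∈ Submodule.span ℂ V :=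
  ⟨fun h u => h ⟨u, rfl⟩, by rintro h _ ⟨u, rfl⟩; exact h u⟩

lemma RangeInSpan.submatrix_equiv {M : Matrix Y Y ℂ} {V : Set (Y → ℂ)} {W : Set (X → ℂ)}
    (hM : RangeInSpan M V) (e : X ≃ Y) (hVW : ∀ v ∈ V, v ∘ e ∈ W) :
    RangeInSpan (M.submatrix e e) W := by
  refine rangeInSpan_iff.2 fun u => ?_
  rw [submatrix_mulVec_equiv]
  exact Submodule.apply_mem_span_of_mapsTo (LinearMap.funLeft ℂ ℂ e) hVW (rangeInSpan_iff.1 hM _)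

lemma RangeInSpan.ptraceSnd {M : Matrix (X × E) (X × E) ℂ} {V : Set (X × E → ℂ)}
    {W : Set (X → ℂ)} (hM : RangeInSpan M V) (hVW : ∀ v ∈ V, ∀ e, (fun x => v (x, e)) ∈ W) :
    RangeInSpan (ptraceSnd M) W := by
  refine rangeInSpan_iff.2 fun u => ?_
  rw [ptraceSnd_mulVec]
  exact Submodule.sum_mem _ fun e _ => Submodule.apply_mem_span_of_mapsTo
    (LinearMap.funLeft ℂ ℂ (·, e)) (fun v hv => hVW v hv e) (rangeInSpan_iff.1 hM _)

end RangeInSpan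

section VSet

variable {D : Type} {θ : D → ℂ} {n m r : ℕ}

lemma mem_VSet_of_eq_prod_mul {v : (Fin n → D) → ℂ} (T : Finset (Fin n)) (hT : n - r ≤ T.card)
    (g : (Fin n → D) → ℂ) (hg : ∀ x y, (∀ i ∉ T, x i = y i) → g x = g y)
    (hv : ∀ x, v x = (∏ i ∈ T, θ (x i)) * g x) : v ∈ VSet n θ r := by
  obtain ⟨S, hST, hS⟩ := Finset.exists_subset_card_eq hT
  let g' x := (∏ i ∈ T \ S, θ (x i)) * g x
  have hg' : ∀ x y, (∀ i ∉ S, x i = y i) → g' x = g' y := fun x y hxy => by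
    dsimp only [g']
    congr 1
    · exact Finset.prod_congr rfl fun i hi => by rw [hxy i (Finset.mem_sdiff.1 hi).2]
    · exact hg x y fun i hi => hxy i fun hiS => hi (hST hiS)
  -- `Ω` evaluates `g'` at any extension of its argument; by `hg'` the choice does not matter.
  refine ⟨S, hS, fun ω => if h : ∃ y : Fin n → D, (fun i => y i.1) = ω then g' h.choose else 0,
    fun x => ?_⟩
  dsimp only
  have hx : ∃ y : Fin n → D, (fun i : {i // i ∉ S} => y i.1) = fun i => x i.1 := ⟨x, rfl⟩
  rw [dif_pos hx, hg' _ x fun i hi => congrFun hx.choose_spec ⟨i, hi⟩, hv, ← Finset.prod_sdiff hST]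
  ring

lemma Fin.prod_eq_prod_castAdd_mul_prod_natAdd {M : Type*} [CommMonoid M]
    (S : Finset (Fin (n + m))) (g : Fin (n + m) → M) :
    ∏ i ∈ S, g i = (∏ i ∈ Finset.univ.filter (Fin.castAdd m · ∈ S), g (Fin.castAdd m i)) *
      ∏ j ∈ Finset.univ.filter (Fin.natAdd n · ∈ S), g (Fin.natAdd n j) := by
  simp [Finset.prod_filter, ← Fin.prod_univ_add (f := fun i => if i ∈ S then g i else 1)]

lemma card_le_card_filter_castAdd_add (S : Finset (Fin (n + m))) :
    S.card ≤ (Finset.univ.filter (Fin.castAdd m · ∈ S)).card + m :=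
  calc S.card
      ≤ ((Finset.univ.filter (Fin.castAdd m · ∈ S)).map (Fin.castAddEmb m) ∪
          Finset.univ.map (Fin.natAddEmb n)).card :=
        Finset.card_le_card fun i hi => by cases i using Fin.addCases <;> simp [hi]
    _ ≤ _ := (Finset.card_union_le _ _).trans (by simp)

lemma append_mem_VSet (hr : r ≤ n) {v : (Fin (n + m) → D) → ℂ} (hv : v ∈ VSet (n + m) θ r)
    (z : Fin m → D) : (fun x => v (Fin.append x z)) ∈ VSet n θ r := by
  obtain ⟨S, hS, Ω, hΩ⟩ := hv
  have hcard := card_le_card_filter_castAdd_add S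
  refine mem_VSet_of_eq_prod_mul (Finset.univ.filter (Fin.castAdd m · ∈ S)) (by omega)
    (fun x => (∏ j ∈ Finset.univ.filter (Fin.natAdd n · ∈ S), θ (z j)) *
      Ω fun i => Fin.append x z i.1) (fun x y hxy => ?_) fun x => ?_
  · congr 2
    funext ⟨i, hi⟩
    cases i using Fin.addCases with
    | left j => simpa using hxy j (by simpa using hi)
    | right j => simp
  · rw [hΩ, Fin.prod_eq_prod_castAdd_mul_prod_natAdd]
    simp only [Fin.append_left, Fin.append_right]
    ring

end VSet

section Marginal

variable {B : Type} [Fintype B] {n m : ℕ}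

lemma marginalFirst_add_apply (M : Matrix (Fin (n + m) → B) (Fin (n + m) → B) ℂ)
    (x y : Fin n → B) :
    marginalFirst (n + m) n M x y = ∑ z : Fin m → B, M (Fin.append x z) (Fin.append y z) := by
  refine Fintype.sum_equiv ((finCongr (by omega)).arrowCongr (Equiv.refl B)) _ _ fun z => ?_
  have glue_eq : ∀ w : Fin n → B, (fun i : Fin (n + m) => if h : (i : ℕ) < n then w ⟨i, h⟩
      else z ⟨(i : ℕ) - n, by omega⟩) = Fin.append w (fun j => z (Fin.cast (by omega) j)) := by
    intro w
    funext i
    refine Fin.addCases (fun j => ?_) (fun j => ?_) i <;> simp [Fin.cast]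
  simp only [glue_eq]
  rfl

lemma marginalFirst_add_eq_ptraceSnd (M : Matrix (Fin (n + m) → B) (Fin (n + m) → B) ℂ) :
    marginalFirst (n + m) n M =
      ptraceSnd (M.submatrix (Fin.appendEquiv n m) (Fin.appendEquiv n m)) := by
  ext x y
  exact marginalFirst_add_apply M x y

lemma Matrix.PosSemidef.marginalFirst {M : Matrix (Fin (n + m) → B) (Fin (n + m) → B) ℂ}
    (hM : M.PosSemidef) : (marginalFirst (n + m) n M).PosSemidef := by
  rw [marginalFirst_add_eq_ptraceSnd]
  exact (hM.submatrix _).ptraceSnd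

lemma trace_marginalFirst (M : Matrix (Fin (n + m) → B) (Fin (n + m) → B) ℂ) :
    (marginalFirst (n + m) n M).trace = M.trace := by
  rw [marginalFirst_add_eq_ptraceSnd, trace_ptraceSnd, trace_submatrix_equiv]

lemma Fin.append_comp_permCongr_sumCongr {α : Type*} (x : Fin n → α) (z : Fin m → α)
    (π : Equiv.Perm (Fin n)) (τ : Equiv.Perm (Fin m)) :
    Fin.append x z ∘ finSumFinEquiv.permCongr (π.sumCongr τ) = Fin.append (x ∘ π) (z ∘ τ) := by
  funext i
  refine Fin.addCases (fun j => ?_) (fun j => ?_) i <;> simp [Equiv.permCongr_apply]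

lemma PermInvariant.marginalFirst {M : Matrix (Fin (n + m) → B) (Fin (n + m) → B) ℂ}
    (hM : PermInvariant M) : PermInvariant (marginalFirst (n + m) n M) := by
  intro π x y
  simp only [marginalFirst_add_apply]
  refine Finset.sum_congr rfl fun z _ => ?_
  simpa [Fin.append_comp_permCongr_sumCongr] using
    hM (finSumFinEquiv.permCongr (π.sumCongr (Equiv.refl _))) (Fin.append x z) (Fin.append y z)

lemma Fin.append_prod {α β : Type*} (a : Fin n → α) (e : Fin n → β) (a' : Fin m → α)
    (e' : Fin m → β) :
    Fin.append (Function.prod a e) (Function.prod a' e') =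
      Function.prod (Fin.append a a') (Fin.append e e') := by
  funext i
  refine Fin.addCases (fun j => ?_) (fun j => ?_) i <;> simp

lemma ptraceE_marginalFirst {E : Type} [Fintype E]
    (M : Matrix (Fin (n + m) → B × E) (Fin (n + m) → B × E) ℂ) :
    ptraceE (marginalFirst (n + m) n M) = marginalFirst (n + m) n (ptraceE M) := by
  ext a a'
  calc ptraceE (marginalFirst (n + m) n M) a a'
      = ∑ e : Fin n → E, ∑ b : Fin m → B, ∑ e' : Fin m → E,
          M (Fin.append (Function.prod a e) (Function.prod b e'))
            (Fin.append (Function.prod a' e) (Function.prod b e')) := by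
        simp only [ptraceE, marginalFirst_add_apply]
        refine Finset.sum_congr rfl fun e _ => ?_
        rw [← Fintype.sum_prod_type']
        exact Fintype.sum_equiv (Equiv.arrowProdEquivProdArrow _ _ _) _ _ fun _ => rfl
    _ = ∑ b : Fin m → B, ∑ e : Fin n → E, ∑ e' : Fin m → E,
          M (Function.prod (Fin.append a b) (Fin.append e e'))
            (Function.prod (Fin.append a' b) (Fin.append e e')) := by
        rw [Finset.sum_comm]
        simp only [Fin.append_prod]
    _ = marginalFirst (n + m) n (ptraceE M) a a' := by
        simp only [marginalFirst_add_apply, ptraceE]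
        refine Finset.sum_congr rfl fun b _ => ?_
        rw [← Fintype.sum_prod_type']
        exact Fintype.sum_equiv (Fin.appendEquiv n m) _ _ fun _ => rfl

lemma RangeInSpan.marginalFirst {D : Type} [Fintype D] {θ : D → ℂ} {r : ℕ} (hr : r ≤ n)
    {M : Matrix (Fin (n + m) → D) (Fin (n + m) → D) ℂ} (hM : RangeInSpan M (VSet (n + m) θ r)) :
    RangeInSpan (marginalFirst (n + m) n M) (VSet n θ r) := by
  rw [marginalFirst_add_eq_ptraceSnd]
  exact (hM.submatrix_equiv (W := {w | ∀ z, (fun x => w (x, z)) ∈ VSet n θ r})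
    (Fin.appendEquiv n m) fun _ hv z => append_mem_VSet hr hv z).ptraceSnd fun _ hw z => hw z

end Marginal

theorem almostIID_marginal_general
    {A : Type} [Fintype A] [DecidableEq A]
    (σ : Matrix A A ℂ)
    (n m r : ℕ) (hr : r ≤ n)
    (ρ : Matrix (Fin (n + m) → A) (Fin (n + m) → A) ℂ)
    (hiid : IsAlmostIID (n + m) r σ ρ) :
    IsAlmostIID n r σ (marginalFirst (n + m) n ρ) := by
  obtain ⟨E, fintypeE, decEqE, θ, hθ, hθσ, ρhat, ⟨hpos, htr⟩, rfl, hperm, hrange⟩ := hiid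
  exact ⟨E, fintypeE, decEqE, θ, hθ, hθσ, marginalFirst (n + m) n ρhat,
    ⟨hpos.marginalFirst, by rw [trace_marginalFirst, htr]⟩,
    ptraceE_marginalFirst ρhat, hperm.marginalFirst, hrange.marginalFirst hr⟩

/-- the marginal on the first `n` subsystems of an `(n + m, r)`-almost-iid
state in `σ` is an `(n, r)`-almost-iid state in `σ`. -/
theorem almostIID_marginal
    {A : Type} [Fintype A] [DecidableEq A]
    (σ : Matrix A A ℂ) (hσ : IsDensity σ)
    (n m r : ℕ) (hr : r ≤ n)
    (ρ : Matrix (Fin (n + m) → A) (Fin (n + m) → A) ℂ) (hρ : IsDensity ρ)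
    (hiid : IsAlmostIID (n + m) r σ ρ) :
    IsAlmostIID n r σ (marginalFirst (n + m) n ρ) :=
  almostIID_marginal_general σ n m r hr ρ hiid
end
end

section
/- Let A and E be finite types, θ ∈ ℂ^(A × E) a unit vector, and n, r, s ∈ ℕ with r ≤ n and s ≥ 1. Let ρ be a density matrix on ℂ^(Fin n → A) admitting an extension ρ̂ on ℂ^(Fin n → A × E) (a density matrix whose partial trace over the E-components equals ρ) whose range is contained in the linear span of V(n, θ, r). Then the s-fold tensor power ρ^{⊗s}, reindexed along a bijection Fin s × Fin n ≅ Fin (n·s) to a density matrix on ℂ^(Fin (n·s) → A), admits an extension on ℂ^(Fin (n·s) → A × E) — namely ρ̂^{⊗s}, reindexed the same way — whose range is contained in the linear span of V(n·s, θ, r·s). -/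
open Matrix BigOperators Kronecker Filter
open scoped Classical ComplexOrder

noncomputable section

/-- The `s`-fold tensor power of a matrix on `Fin n → A`, reindexed along a bijection
`Fin s × Fin n ≃ Fin (n·s)` to a matrix on `Fin (n·s) → A`. -/
def tensorPowReindexed {A : Type} (n s : ℕ) (e : Fin s × Fin n ≃ Fin (n * s))
    (M : Matrix (Fin n → A) (Fin n → A) ℂ) :
    Matrix (Fin (n * s) → A) (Fin (n * s) → A) ℂ :=
  fun u v => ∏ i : Fin s, M (fun j => u (e (i, j))) (fun j => v (e (i, j)))

/-! The tensor power of `ρhat` is positive semidefinite because `ρhat = Bᴴ B` gives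
`ρhat^{⊗s} = (B^{⊗s})ᴴ B^{⊗s}`, its trace is `(tr ρhat)^s`, and partial traces factor over
the blocks. For the range: the columns of `ρhat^{⊗s}` are tensor products of columns of `ρhat`,
tensor products are multilinear, and a tensor product of `s` vectors of `V(n, θ, r)` is
`θ`-iid on the union of the `s` index sets, i.e. lies in `V(n·s, θ, r·s)`. -/

section TensorPow

variable {X : Type} [Fintype X]

lemma tensorPow_mul (M N : Matrix X X ℂ) (s : ℕ) :
    tensorPow (M * N) s = tensorPow M s * tensorPow N s := by
  ext x y
  simp only [tensorPow, mul_apply, Fintype.prod_sum]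
  exact Fintype.sum_congr _ _ fun z => Finset.prod_mul_distrib

omit [Fintype X] in
lemma tensorPow_conjTranspose (M : Matrix X X ℂ) (s : ℕ) :
    tensorPow Mᴴ s = (tensorPow M s)ᴴ := by
  ext x y
  simp [tensorPow, star_prod]

open scoped MatrixOrder in
lemma Matrix.PosSemidef.tensorPow {M : Matrix X X ℂ} (hM : M.PosSemidef) (s : ℕ) :
    (tensorPow M s).PosSemidef := by
  obtain ⟨B, rfl⟩ := CStarAlgebra.nonneg_iff_eq_star_mul_self.mp hM.nonneg
  rw [star_eq_conjTranspose, tensorPow_mul, tensorPow_conjTranspose]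
  exact posSemidef_conjTranspose_mul_self _

lemma trace_tensorPow (M : Matrix X X ℂ) (s : ℕ) : (tensorPow M s).trace = M.trace ^ s := by
  simp only [trace, diag, tensorPow, Fintype.sum_pow]

end TensorPow

lemma MultilinearMap.map_mem_span_of_forall_mem_span {ι R N : Type} {M : ι → Type}
    [Fintype ι] [DecidableEq ι] [CommSemiring R] [∀ i, AddCommMonoid (M i)]
    [∀ i, Module R (M i)] [AddCommMonoid N] [Module R N] (f : MultilinearMap R M N)
    {V : ∀ i, Set (M i)} {W : Set N} (hW : ∀ u, (∀ i, u i ∈ V i) → f u ∈ W)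
    {v : ∀ i, M i} (hv : ∀ i, v i ∈ Submodule.span R (V i)) : f v ∈ Submodule.span R W := by
  choose m c g hg using fun i => Submodule.mem_span_set'.mp (hv i)
  have hv' : v = fun i => ∑ k, c i k • (g i k : M i) := funext fun i => (hg i).symm
  rw [hv', f.map_sum]
  refine Submodule.sum_mem _ fun k _ => ?_
  rw [f.map_smul_univ]
  exact Submodule.smul_mem _ _ (Submodule.subset_span (hW _ fun i => (g i (k i)).2))

lemma rangeInSpan_iff_col_mem {X : Type} [Fintype X] (M : Matrix X X ℂ) (V : Set (X → ℂ)) :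
    RangeInSpan M V ↔ ∀ y, M.col y ∈ Submodule.span ℂ V := by
  rw [RangeInSpan, range_mulVecLin, Submodule.span_le, Set.range_subset_iff]
  rfl

section Blocks

variable {D : Type} {n s : ℕ} (e : Fin s × Fin n ≃ Fin (n * s))

def blockCurry : (Fin (n * s) → D) ≃ (Fin s → Fin n → D) where
  toFun u i j := u (e (i, j))
  invFun z k := z (e.symm k).1 (e.symm k).2
  left_inv u := by ext k; simp
  right_inv z := by ext i j; simp

lemma tensorPowReindexed_eq_submatrix (M : Matrix (Fin n → D) (Fin n → D) ℂ) :
    tensorPowReindexed n s e M = (tensorPow M s).submatrix (blockCurry e) (blockCurry e) :=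
  rfl

lemma IsDensity.tensorPowReindexed [Fintype D] [DecidableEq D]
    {M : Matrix (Fin n → D) (Fin n → D) ℂ} (hM : IsDensity M) :
    IsDensity (tensorPowReindexed n s e M) := by
  rw [tensorPowReindexed_eq_submatrix]
  refine ⟨(hM.1.tensorPow s).submatrix _, ?_⟩
  calc ((tensorPow M s).submatrix (blockCurry e) (blockCurry e)).trace
      = (tensorPow M s).trace := Fintype.sum_equiv (blockCurry e) _ _ fun _ => rfl
    _ = 1 := by rw [trace_tensorPow, hM.2, one_pow]

lemma ptraceE_tensorPowReindexed {A E : Type} [Fintype E]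
    (M : Matrix (Fin n → A × E) (Fin n → A × E) ℂ) :
    ptraceE (tensorPowReindexed n s e M) = tensorPowReindexed n s e (ptraceE M) := by
  ext a a'
  simp only [ptraceE, tensorPowReindexed, Fintype.prod_sum]
  exact Fintype.sum_equiv (blockCurry e) _ _ fun _ => rfl

def blockTensor :
    MultilinearMap ℂ (fun _ : Fin s => (Fin n → D) → ℂ) ((Fin (n * s) → D) → ℂ) :=
  MultilinearMap.pi fun u => (MultilinearMap.mkPiAlgebra ℂ (Fin s) ℂ).compLinearMap
    fun i => LinearMap.proj fun j => u (e (i, j))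

lemma blockTensor_apply (v : Fin s → (Fin n → D) → ℂ) (u : Fin (n * s) → D) :
    blockTensor e v u = ∏ i, v i fun j => u (e (i, j)) := by
  simp [blockTensor]

lemma col_tensorPowReindexed (M : Matrix (Fin n → D) (Fin n → D) ℂ) (y : Fin (n * s) → D) :
    (tensorPowReindexed n s e M).col y = blockTensor e fun i => M.col fun j => y (e (i, j)) := by
  ext u
  rw [blockTensor_apply]
  rfl

/-- The union of the blocks `e (i, T i)`. -/
def blockUnion (T : Fin s → Finset (Fin n)) : Finset (Fin (n * s)) :=
  (Finset.univ.filter fun p : Fin s × Fin n => p.2 ∈ T p.1).map e.toEmbedding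

lemma mem_blockUnion (T : Fin s → Finset (Fin n)) (i : Fin s) (j : Fin n) :
    e (i, j) ∈ blockUnion e T ↔ j ∈ T i := by
  simp [blockUnion]

lemma prod_blockUnion (T : Fin s → Finset (Fin n)) (g : Fin (n * s) → ℂ) :
    ∏ k ∈ blockUnion e T, g k = ∏ i, ∏ j ∈ T i, g (e (i, j)) := by
  rw [blockUnion, Finset.prod_map, Finset.prod_filter, Fintype.prod_prod_type]
  exact Fintype.prod_congr _ _ fun i => (Finset.prod_filter _ _).symm.trans (by simp)

lemma card_blockUnion (T : Fin s → Finset (Fin n)) :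
    (blockUnion e T).card = ∑ i, (T i).card := by
  rw [blockUnion, Finset.card_map, Finset.card_filter, Fintype.sum_prod_type]
  exact Fintype.sum_congr _ _ fun i => (Finset.card_filter _ _).symm.trans (by simp)

lemma blockTensor_mem_VSet {θ : D → ℂ} {r : ℕ} {v : Fin s → (Fin n → D) → ℂ}
    (hv : ∀ i, v i ∈ VSet n θ r) :
    blockTensor e v ∈ VSet (n * s) θ (r * s) := by
  choose T hT Ω hΩ using hv
  have not_mem (i : Fin s) (j : {j : Fin n // j ∉ T i}) : e (i, j.1) ∉ blockUnion e T :=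
    (mem_blockUnion e T i j).not.mpr j.2
  refine ⟨blockUnion e T, ?_, fun y => ∏ i, Ω i fun j => y ⟨e (i, j.1), not_mem i j⟩,
    fun x => ?_⟩
  · simp only [card_blockUnion, hT, Finset.sum_const, Finset.card_univ, Fintype.card_fin,
      smul_eq_mul]
    rw [mul_comm s, Nat.sub_mul]
  · rw [blockTensor_apply, prod_blockUnion, ← Finset.prod_mul_distrib]
    exact Finset.prod_congr rfl fun i _ => hΩ i _

lemma RangeInSpan.tensorPowReindexed {θ : D → ℂ} {r : ℕ} [Fintype D]
    {M : Matrix (Fin n → D) (Fin n → D) ℂ} (hM : RangeInSpan M (VSet n θ r)) :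
    RangeInSpan (tensorPowReindexed n s e M) (VSet (n * s) θ (r * s)) := by
  rw [rangeInSpan_iff_col_mem] at hM ⊢
  intro y
  rw [col_tensorPowReindexed]
  exact (blockTensor e).map_mem_span_of_forall_mem_span (fun _ => blockTensor_mem_VSet e)
    fun _ => hM _

end Blocks

theorem almostIID_tensor_power_general
    {A E : Type} [Fintype A] [DecidableEq A] [Fintype E] [DecidableEq E]
    (θ : A × E → ℂ)
    (n r s : ℕ)
    (ρ : Matrix (Fin n → A) (Fin n → A) ℂ)
    (ρhat : Matrix (Fin n → A × E) (Fin n → A × E) ℂ) (hρhat : IsDensity ρhat)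
    (hext : ptraceE ρhat = ρ)
    (hrange : RangeInSpan ρhat (VSet n θ r))
    (e : Fin s × Fin n ≃ Fin (n * s)) :
    IsDensity (tensorPowReindexed n s e ρhat) ∧
    ptraceE (tensorPowReindexed n s e ρhat) = tensorPowReindexed n s e ρ ∧
    RangeInSpan (tensorPowReindexed n s e ρhat) (VSet (n * s) θ (r * s)) :=
  ⟨hρhat.tensorPowReindexed e, hext ▸ ptraceE_tensorPowReindexed e ρhat,
    hrange.tensorPowReindexed e⟩

/-- tensor powers of generalized-almost-iid states are
generalized-almost-iid. -/
theorem almostIID_tensor_power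
    {A E : Type} [Fintype A] [DecidableEq A] [Fintype E] [DecidableEq E]
    (θ : A × E → ℂ) (hθ : IsUnitVec θ)
    (n r s : ℕ) (hr : r ≤ n) (hs : 1 ≤ s)
    (ρ : Matrix (Fin n → A) (Fin n → A) ℂ) (hρ : IsDensity ρ)
    (ρhat : Matrix (Fin n → A × E) (Fin n → A × E) ℂ) (hρhat : IsDensity ρhat)
    (hext : ptraceE ρhat = ρ)
    (hrange : RangeInSpan ρhat (VSet n θ r))
    (e : Fin s × Fin n ≃ Fin (n * s)) :
    IsDensity (tensorPowReindexed n s e ρhat) ∧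
    ptraceE (tensorPowReindexed n s e ρhat) = tensorPowReindexed n s e ρ ∧
    RangeInSpan (tensorPowReindexed n s e ρhat) (VSet (n * s) θ (r * s)) :=
  almostIID_tensor_power_general θ n r s ρ ρhat hρhat hext hrange e

end
end

section
/- Let A and E be finite types, σ a density matrix on ℂ^A, and n, r ∈ ℕ with r ≤ n. Let θ, θ̃ ∈ ℂ^(A × E) be two unit vectors with tr_E |θ⟩⟨θ| = tr_E |θ̃⟩⟨θ̃| = σ. If a density matrix ρ on ℂ^(Fin n → A) admits an extension ρ̂ on ℂ^(Fin n → A × E) (a density matrix whose partial trace over the E-components equals ρ) that is invariant under the simultaneous permutation action of every permutation of Fin n and whose range is contained in the linear span of V(n, θ, r), then ρ also admits an extension on ℂ^(Fin n → A × E) that is invariant under the simultaneous permutation action of every permutation of Fin n and whose range is contained in the linear span of V(n, θ̃, r). -/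
open Matrix BigOperators Kronecker Filter
open scoped Classical ComplexOrder

noncomputable section

/-!
A purification `θ` of `σ`, read as the matrix `P θ : Matrix E A ℂ` with entries `θ (a, e)`, has
reduced state `(P θᴴ * P θ)ᵀ`. Two purifications of the same `σ` therefore have equal Gram
matrices and differ by an isometry `W` of `ℂ^E`: `(1 ⊗ₖ W) θ = θ'`. Conjugating `ρ̂` by the `n`-fold
tensor power of `1 ⊗ₖ W` keeps it a density matrix, does not change its partial trace over the
`E`-systems (the isometry acts only there), commutes with permutations of the factors, and maps
`V(n, θ, r)` into `V(n, θ', r)` since it acts factorwise.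
-/

open scoped InnerProductSpace in
theorem LinearMap.exists_linearIsometry_comp_eq_of_norm_eq {𝕜 V W : Type*} [RCLike 𝕜]
    [NormedAddCommGroup V] [InnerProductSpace 𝕜 V]
    [NormedAddCommGroup W] [InnerProductSpace 𝕜 W] [FiniteDimensional 𝕜 W]
    (f g : V →ₗ[𝕜] W) (h : ∀ x, ‖f x‖ = ‖g x‖) :
    ∃ T : W →ₗᵢ[𝕜] W, T.toLinearMap ∘ₗ f = g := by
  have hker : LinearMap.ker f ≤ LinearMap.ker g := fun x hx => by
    rw [LinearMap.mem_ker, ← norm_eq_zero, ← h, norm_eq_zero]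
    exact hx
  let φ : LinearMap.range f →ₗ[𝕜] W :=
    (LinearMap.ker f).liftQ g hker ∘ₗ f.quotKerEquivRange.symm.toLinearMap
  have hφ : ∀ x, φ ⟨f x, LinearMap.mem_range_self f x⟩ = g x := fun x => by
    have : f.quotKerEquivRange.symm ⟨f x, LinearMap.mem_range_self f x⟩ =
        Submodule.Quotient.mk x :=
      (LinearEquiv.symm_apply_eq _).mpr (Subtype.ext (f.quotKerEquivRange_apply_mk x).symm)
    simp [φ, this]
  let L : LinearMap.range f →ₗᵢ[𝕜] W :=
    ⟨φ, by rintro ⟨_, x, rfl⟩; exact (congrArg norm (hφ x)).trans (h x).symm⟩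
  refine ⟨L.extend, LinearMap.ext fun x => ?_⟩
  exact (L.extend_apply ⟨f x, LinearMap.mem_range_self f x⟩).trans (hφ x)

open scoped InnerProductSpace in
theorem Matrix.exists_conjTranspose_mul_self_eq_one_and_mul_eq {𝕜 m n : Type*} [RCLike 𝕜]
    [Fintype m] [DecidableEq m] [Fintype n] [DecidableEq n]
    {P Q : Matrix m n 𝕜} (h : Pᴴ * P = Qᴴ * Q) :
    ∃ W : Matrix m m 𝕜, Wᴴ * W = 1 ∧ W * P = Q := by
  have hnorm : ∀ (R : Matrix m n 𝕜) x,
      ‖toEuclideanLin R x‖ ^ 2 = RCLike.re ⟪x, toEuclideanLin (Rᴴ * R) x⟫_𝕜 := fun R x => by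
    rw [toLpLin_mul_same, toEuclideanLin_conjTranspose_eq_adjoint, LinearMap.comp_apply,
      LinearMap.adjoint_inner_right, ← inner_self_eq_norm_sq (𝕜 := 𝕜)]
  obtain ⟨T, hT⟩ := LinearMap.exists_linearIsometry_comp_eq_of_norm_eq
    (toEuclideanLin P) (toEuclideanLin Q) fun x => by
      rw [← sq_eq_sq₀ (norm_nonneg _) (norm_nonneg _), hnorm, hnorm, h]
  refine ⟨toEuclideanLin.symm T.toLinearMap, ?_, ?_⟩
  · apply toEuclideanLin.injective
    rw [toLpLin_mul_same, toEuclideanLin_conjTranspose_eq_adjoint, LinearEquiv.apply_symm_apply,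
      LinearIsometry.adjoint_comp_self', toLpLin_one]
  · apply toEuclideanLin.injective
    rw [toLpLin_mul_same, LinearEquiv.apply_symm_apply, hT]

section TensorPow

variable {X : Type} {n : ℕ}

theorem tensorPow_mul_s15 [Fintype X] (P Q : Matrix X X ℂ) (n : ℕ) :
    tensorPow P n * tensorPow Q n = tensorPow (P * Q) n := by
  ext x y
  simp only [mul_apply, tensorPow, Finset.prod_univ_sum, Fintype.piFinset_univ,
    Finset.prod_mul_distrib]

theorem tensorPow_one [Fintype X] [DecidableEq X] (n : ℕ) :
    tensorPow (1 : Matrix X X ℂ) n = 1 := by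
  ext x y
  simp [tensorPow, one_apply, Finset.prod_ite_zero, funext_iff]

theorem conjTranspose_tensorPow (P : Matrix X X ℂ) (n : ℕ) :
    (tensorPow P n)ᴴ = tensorPow Pᴴ n := by
  ext x y
  simp [tensorPow, conjTranspose_apply]

theorem permInvariant_tensorPow (P : Matrix X X ℂ) (n : ℕ) : PermInvariant (tensorPow P n) :=
  fun π x y => Equiv.prod_comp π fun i => P (x i) (y i)

theorem conjTranspose_tensorPow_mul_tensorPow [Fintype X] [DecidableEq X] {W : Matrix X X ℂ}
    (hW : Wᴴ * W = 1) (n : ℕ) : (tensorPow W n)ᴴ * tensorPow W n = 1 := by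
  rw [conjTranspose_tensorPow, tensorPow_mul_s15, hW, tensorPow_one]

theorem PermInvariant.mul [Fintype X] {P Q : Matrix (Fin n → X) (Fin n → X) ℂ}
    (hP : PermInvariant P) (hQ : PermInvariant Q) : PermInvariant (P * Q) := fun π x y =>
  (Fintype.sum_equiv (Equiv.arrowCongr π.symm (Equiv.refl X)) _ _ fun z => by
    simp only [← hP π x z, ← hQ π z y]; rfl).symm

theorem PermInvariant.conjTranspose {P : Matrix (Fin n → X) (Fin n → X) ℂ}
    (hP : PermInvariant P) : PermInvariant Pᴴ := fun π x y => by
  simp only [conjTranspose_apply, hP π]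

end TensorPow

section PartialTrace

variable {A B : Type} {n : ℕ}

theorem splitAB_mul [Fintype A] [Fintype B] (P Q : Matrix (Fin n → A × B) (Fin n → A × B) ℂ) :
    splitAB n (P * Q) = splitAB n P * splitAB n Q :=
  (submatrix_mul_equiv P Q _ _ _).symm

theorem splitAB_conjTranspose (P : Matrix (Fin n → A × B) (Fin n → A × B) ℂ) :
    splitAB n Pᴴ = (splitAB n P)ᴴ :=
  (conjTranspose_submatrix P _ _).symm

theorem splitAB_tensorPow_kronecker (P : Matrix A A ℂ) (Q : Matrix B B ℂ) (n : ℕ) :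
    splitAB n (tensorPow (P ⊗ₖ Q) n) = tensorPow P n ⊗ₖ tensorPow Q n := by
  ext ⟨a, b⟩ ⟨a', b'⟩
  simp [splitAB, tensorPow, Finset.prod_mul_distrib]

theorem ptraceE_eq_ptraceSnd_splitAB [Fintype B] (M : Matrix (Fin n → A × B) (Fin n → A × B) ℂ) :
    ptraceE M = ptraceSnd (splitAB n M) :=
  rfl

theorem ptraceSnd_one_kronecker_mul [Fintype A] [DecidableEq A] [Fintype B]
    (K : Matrix B B ℂ) (M : Matrix (A × B) (A × B) ℂ) :
    ptraceSnd (((1 : Matrix A A ℂ) ⊗ₖ K) * M) = ptraceSnd (M * ((1 : Matrix A A ℂ) ⊗ₖ K)) := by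
  ext a a'
  simp only [ptraceSnd, mul_apply, kroneckerMap_apply, one_apply, ite_mul, one_mul, zero_mul,
    Fintype.sum_prod_type, Finset.sum_ite_irrel, Finset.sum_const_zero, Finset.sum_ite_eq,
    Finset.mem_univ, ↓reduceIte, mul_ite, mul_zero, Finset.sum_ite_eq']
  rw [Finset.sum_comm]
  exact Finset.sum_congr rfl fun _ _ => Finset.sum_congr rfl fun _ _ => mul_comm _ _

theorem conjTranspose_one_kronecker_mul_one_kronecker [Fintype A] [DecidableEq A] [Fintype B]
    [DecidableEq B] {W : Matrix B B ℂ} (hW : Wᴴ * W = 1) :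
    ((1 : Matrix A A ℂ) ⊗ₖ W)ᴴ * ((1 : Matrix A A ℂ) ⊗ₖ W) = 1 := by
  rw [conjTranspose_kronecker, conjTranspose_one, ← mul_kronecker_mul, one_mul, hW,
    one_kronecker_one]

theorem ptraceSnd_conj_one_kronecker [Fintype A] [DecidableEq A] [Fintype B] [DecidableEq B]
    {W : Matrix B B ℂ} (hW : Wᴴ * W = 1) (M : Matrix (A × B) (A × B) ℂ) :
    ptraceSnd (((1 : Matrix A A ℂ) ⊗ₖ W) * M * ((1 : Matrix A A ℂ) ⊗ₖ W)ᴴ) = ptraceSnd M := by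
  rw [mul_assoc, ptraceSnd_one_kronecker_mul, mul_assoc,
    conjTranspose_one_kronecker_mul_one_kronecker hW, mul_one]

theorem ptraceE_conj_tensorPow_one_kronecker [Fintype A] [DecidableEq A] [Fintype B]
    [DecidableEq B] {W : Matrix B B ℂ} (hW : Wᴴ * W = 1)
    (M : Matrix (Fin n → A × B) (Fin n → A × B) ℂ) :
    ptraceE (tensorPow ((1 : Matrix A A ℂ) ⊗ₖ W) n * M *
      (tensorPow ((1 : Matrix A A ℂ) ⊗ₖ W) n)ᴴ) = ptraceE M := by
  rw [ptraceE_eq_ptraceSnd_splitAB, ptraceE_eq_ptraceSnd_splitAB, splitAB_mul, splitAB_mul,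
    splitAB_conjTranspose, splitAB_tensorPow_kronecker, tensorPow_one,
    ptraceSnd_conj_one_kronecker (conjTranspose_tensorPow_mul_tensorPow hW n)]

end PartialTrace

theorem IsDensity.conj_of_conjTranspose_mul_self_eq_one {X Y : Type} [Fintype X] [DecidableEq X]
    [Fintype Y] [DecidableEq Y] {ρ : Matrix X X ℂ} (hρ : IsDensity ρ) {G : Matrix Y X ℂ}
    (hG : Gᴴ * G = 1) : IsDensity (G * ρ * Gᴴ) :=
  ⟨hρ.1.mul_mul_conjTranspose_same G, by rw [trace_mul_cycle, hG, one_mul, hρ.2]⟩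

theorem RangeInSpan.mul_mul {X : Type} [Fintype X] {ρ : Matrix X X ℂ} {V V' : Set (X → ℂ)}
    (hρ : RangeInSpan ρ V) {G : Matrix X X ℂ} (hG : ∀ v ∈ V, G *ᵥ v ∈ V') (H : Matrix X X ℂ) :
    RangeInSpan (G * ρ * H) V' :=
  calc LinearMap.range (G * ρ * H).mulVecLin
      ≤ LinearMap.range (G.mulVecLin ∘ₗ ρ.mulVecLin) := by
        rw [mulVecLin_mul, mulVecLin_mul]; exact LinearMap.range_comp_le_range _ _
    _ = (LinearMap.range ρ.mulVecLin).map G.mulVecLin := LinearMap.range_comp _ _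
    _ ≤ (Submodule.span ℂ V).map G.mulVecLin := Submodule.map_mono hρ
    _ = Submodule.span ℂ (G.mulVecLin '' V) := Submodule.map_span _ _
    _ ≤ Submodule.span ℂ V' := Submodule.span_mono (Set.image_subset_iff.mpr hG)

theorem tensorPow_mulVec_prod_mul {D : Type} [Fintype D] {n : ℕ} (G : Matrix D D ℂ)
    (S : Finset (Fin n)) (θ : D → ℂ) (Ω : ({i // i ∉ S} → D) → ℂ) (x : Fin n → D) :
    (tensorPow G n *ᵥ fun z => (∏ i ∈ S, θ (z i)) * Ω fun i => z i) x
      = (∏ i ∈ S, (G *ᵥ θ) (x i)) * ∑ w, (∏ i : {i // i ∉ S}, G (x i) (w i)) * Ω w := by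
  have hS : ∀ f : Fin n → ℂ, ∏ i ∈ S, f i = ∏ i : {i // i ∈ S}, f i :=
    Finset.prod_subtype S fun _ => Iff.rfl
  have hsplit : ∀ z : Fin n → D, (∏ i, G (x i) (z i)) * ((∏ i ∈ S, θ (z i)) * Ω fun i => z i)
      = (∏ i : {i // i ∈ S}, G (x i) (z i) * θ (z i)) *
          ((∏ i : {i // i ∉ S}, G (x i) (z i)) * Ω fun i => z i) := fun z => by
    rw [← Finset.prod_mul_prod_compl S, hS, hS, Finset.prod_mul_distrib,
      Finset.prod_subtype Sᶜ fun _ => Finset.mem_compl]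
    ring
  calc (tensorPow G n *ᵥ fun z => (∏ i ∈ S, θ (z i)) * Ω fun i => z i) x
      = ∑ p : ({i // i ∈ S} → D) × ({i // i ∉ S} → D),
          (∏ i : {i // i ∈ S}, G (x i) (p.1 i) * θ (p.1 i)) *
          ((∏ i : {i // i ∉ S}, G (x i) (p.2 i)) * Ω p.2) :=
        Fintype.sum_equiv (Equiv.piEquivPiSubtypeProd (· ∈ S) fun _ => D) _ _ hsplit
    _ = (∑ u : {i // i ∈ S} → D, ∏ i : {i // i ∈ S}, G (x i) (u i) * θ (u i)) *
          ∑ w, (∏ i : {i // i ∉ S}, G (x i) (w i)) * Ω w := by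
        rw [Fintype.sum_prod_type, Finset.sum_mul_sum]
    _ = (∏ i ∈ S, (G *ᵥ θ) (x i)) * ∑ w, (∏ i : {i // i ∉ S}, G (x i) (w i)) * Ω w := by
        rw [hS]
        simp only [mulVec, dotProduct, Finset.prod_univ_sum, Fintype.piFinset_univ]

theorem tensorPow_mulVec_mem_VSet {D : Type} [Fintype D] {n r : ℕ} {G : Matrix D D ℂ}
    {θ θ' : D → ℂ} (hG : G *ᵥ θ = θ') {v : (Fin n → D) → ℂ} (hv : v ∈ VSet n θ r) :
    tensorPow G n *ᵥ v ∈ VSet n θ' r := by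
  obtain ⟨S, hS, Ω, hΩ⟩ := hv
  obtain rfl := funext hΩ
  exact ⟨S, hS, fun y => ∑ w, (∏ i, G (y i) (w i)) * Ω w, fun x => by
    rw [tensorPow_mulVec_prod_mul, hG]⟩

theorem conjTranspose_mul_self_eq_transpose_ptraceSnd {A E : Type} [Fintype E]
    (θ : A × E → ℂ) :
    (of fun e a => θ (a, e))ᴴ * (of fun e a => θ (a, e)) = (ptraceSnd (outer θ θ))ᵀ := by
  ext a a'
  simp [mul_apply, ptraceSnd, outer, mul_comm]

theorem one_kronecker_mulVec_apply {A E : Type} [Fintype A] [DecidableEq A] [Fintype E]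
    (W : Matrix E E ℂ) (θ : A × E → ℂ) (a : A) (e : E) :
    (((1 : Matrix A A ℂ) ⊗ₖ W) *ᵥ θ) (a, e) = (W * of fun e a => θ (a, e)) e a := by
  simp [mulVec, dotProduct, mul_apply, Fintype.sum_prod_type, one_apply]

theorem exists_isometry_one_kronecker_mulVec_eq {A E : Type} [Fintype A] [DecidableEq A]
    [Fintype E] [DecidableEq E] {θ θ' : A × E → ℂ}
    (h : ptraceSnd (outer θ θ) = ptraceSnd (outer θ' θ')) :
    ∃ W : Matrix E E ℂ, Wᴴ * W = 1 ∧ ((1 : Matrix A A ℂ) ⊗ₖ W) *ᵥ θ = θ' := by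
  obtain ⟨W, hW, hWθ⟩ := exists_conjTranspose_mul_self_eq_one_and_mul_eq
      (P := of fun e a => θ (a, e)) (Q := of fun e a => θ' (a, e)) <| by
    rw [conjTranspose_mul_self_eq_transpose_ptraceSnd, h,
      ← conjTranspose_mul_self_eq_transpose_ptraceSnd θ']
  refine ⟨W, hW, funext fun ⟨a, e⟩ => ?_⟩
  rw [one_kronecker_mulVec_apply, hWθ, of_apply]

theorem almostIID_any_purification_general
    {A E : Type} [Fintype A] [DecidableEq A] [Fintype E] [DecidableEq E]
    (σ : Matrix A A ℂ)
    (n r : ℕ)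
    (θ θ' : A × E → ℂ)
    (hθpur : ptraceSnd (outer θ θ) = σ) (hθ'pur : ptraceSnd (outer θ' θ') = σ)
    (ρ : Matrix (Fin n → A) (Fin n → A) ℂ)
    (ρhat : Matrix (Fin n → A × E) (Fin n → A × E) ℂ) (hρhat : IsDensity ρhat)
    (hext : ptraceE ρhat = ρ) (hperm : PermInvariant ρhat)
    (hrange : RangeInSpan ρhat (VSet n θ r)) :
    ∃ ρhat' : Matrix (Fin n → A × E) (Fin n → A × E) ℂ,
      IsDensity ρhat' ∧ ptraceE ρhat' = ρ ∧ PermInvariant ρhat' ∧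
      RangeInSpan ρhat' (VSet n θ' r) := by
  obtain ⟨W, hW, hWθ⟩ := exists_isometry_one_kronecker_mulVec_eq (hθpur.trans hθ'pur.symm)
  set G := tensorPow ((1 : Matrix A A ℂ) ⊗ₖ W) n
  have hG : Gᴴ * G = 1 :=
    conjTranspose_tensorPow_mul_tensorPow (conjTranspose_one_kronecker_mul_one_kronecker hW) n
  refine ⟨G * ρhat * Gᴴ, hρhat.conj_of_conjTranspose_mul_self_eq_one hG, ?_, ?_, ?_⟩
  · rw [ptraceE_conj_tensorPow_one_kronecker hW, hext]
  · exact ((permInvariant_tensorPow _ n).mul hperm).mul (permInvariant_tensorPow _ n).conjTranspose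
  · exact hrange.mul_mul (fun v hv => tensorPow_mulVec_mem_VSet hWθ hv) _

/-- the witnessing extension of an almost-iid state can be chosen with
respect to any purification of `σ`. -/
theorem almostIID_any_purification
    {A E : Type} [Fintype A] [DecidableEq A] [Fintype E] [DecidableEq E]
    (σ : Matrix A A ℂ) (hσ : IsDensity σ)
    (n r : ℕ) (hr : r ≤ n)
    (θ θ' : A × E → ℂ) (hθ : IsUnitVec θ) (hθ' : IsUnitVec θ')
    (hθpur : ptraceSnd (outer θ θ) = σ) (hθ'pur : ptraceSnd (outer θ' θ') = σ)
    (ρ : Matrix (Fin n → A) (Fin n → A) ℂ) (hρ : IsDensity ρ)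
    (ρhat : Matrix (Fin n → A × E) (Fin n → A × E) ℂ) (hρhat : IsDensity ρhat)
    (hext : ptraceE ρhat = ρ) (hperm : PermInvariant ρhat)
    (hrange : RangeInSpan ρhat (VSet n θ r)) :
    ∃ ρhat' : Matrix (Fin n → A × E) (Fin n → A × E) ℂ,
      IsDensity ρhat' ∧ ptraceE ρhat' = ρ ∧ PermInvariant ρhat' ∧
      RangeInSpan ρhat' (VSet n θ' r) :=
  almostIID_any_purification_general σ n r θ θ' hθpur hθ'pur ρ ρhat hρhat hext hperm hrange

end
end

section
/- For all natural numbers n, r, d with r ≤ n and d ≥ 1: ∑_{k=0}^{r} C(n, k)·(d − 1)^k ≤ C(n, r)·d^r, where C(a, b) denotes the binomial coefficient. -/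
open BigOperators

/-!
Expand `d ^ r = ((d - 1) + 1) ^ r` by the binomial theorem and compare termwise: choosing a
`k`-subset of an `n`-set can be done by first choosing an `r`-set containing it and then the
`k`-subset inside it, so `C(n, k) ≤ C(n, r) · C(r, k)` for `k ≤ r ≤ n`.
-/

theorem Nat.choose_le_choose_mul_choose {n r k : ℕ} (hkr : k ≤ r) (hrn : r ≤ n) :
    n.choose k ≤ n.choose r * r.choose k := by
  rw [Nat.choose_mul hkr]
  exact Nat.le_mul_of_pos_right _ (Nat.choose_pos (Nat.sub_le_sub_right hrn k))

theorem sum_choose_mul_pow_le_choose_mul_add_one_pow {R : Type*} [CommSemiring R]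
    [PartialOrder R] [IsOrderedRing R] {n r : ℕ} (hrn : r ≤ n) {x : R} (hx : 0 ≤ x) :
    ∑ k ∈ Finset.range (r + 1), (n.choose k : R) * x ^ k ≤ n.choose r * (x + 1) ^ r := by
  rw [add_pow, Finset.mul_sum]
  refine Finset.sum_le_sum fun k hk => ?_
  have hkr : k ≤ r := Nat.lt_succ_iff.mp (Finset.mem_range.mp hk)
  calc (n.choose k : R) * x ^ k ≤ (n.choose r * r.choose k : ℕ) * x ^ k := by
        gcongr
        exact Nat.choose_le_choose_mul_choose hkr hrn
    _ = n.choose r * (x ^ k * 1 ^ (r - k) * r.choose k) := by push_cast; ring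

/-- counting bound `∑_{k=0}^{r} C(n,k)·(d−1)^k ≤ C(n,r)·d^r`. -/
theorem choose_sum_le_choose_mul_pow
    (n r d : ℕ) (hr : r ≤ n) (hd : 1 ≤ d) :
    ∑ k ∈ Finset.range (r + 1), n.choose k * (d - 1) ^ k ≤ n.choose r * d ^ r := by
  simpa [Nat.sub_add_cancel hd] using
    sum_choose_mul_pow_le_choose_mul_add_one_pow (R := ℕ) hr (Nat.zero_le (d - 1))
end
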